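/- arXiv:1212.6656 — 2 statements merged into one kernel-verified Lean document; each statement's English description precedes it below -/
import Mathlib

section
/- Let λ = (a_1,…,a_n) ∈ ℂ^n and let j ≥ 1 and z ≥ 2 be integers with j + z − 1 ≤ n, such that: a_i − a_{i+1} ∈ ℤ_{>0} for 1 ≤ i ≤ j−1, a_j = a_{j+1} = ⋯ = a_{j+z−1} = 0, and a_i − a_{i+1} ∈ ℤ_{>0} for j+z−1 ≤ i ≤ n−1 (so a_1 > ⋯ > a_{j−1} > 0 = a_j = ⋯ = a_{j+z−1} > a_{j+z} > ⋯ > a_n with all displayed differences positive integers). Let k be an integer with j + z − 1 ≤ k ≤ n−1, and set (b_1,…,b_n) := s_1 s_2 ⋯ s_k * λ. Then b_i ≻ b_{i+1} for all 2 ≤ i ≤ n−1. -/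
open Finset

/-- The 1-based `i`-th coordinate of a weight `λ ∈ ℂ^n` (0 if out of range). -/
def coord {n : ℕ} (lam : Fin n → ℂ) (i : ℕ) : ℂ :=
  if h : 1 ≤ i ∧ i ≤ n then lam ⟨i - 1, by omega⟩ else 0

/-- The star action of the generator `s_i` (1 ≤ i ≤ n-1) on weights:
swap coordinates `i` and `i+1` if their sum is nonzero, otherwise replace
`(λ_i, λ_{i+1})` by `(λ_{i+1} - 1, λ_i + 1)`. -/
noncomputable def sStar {n : ℕ} (i : ℕ) (lam : Fin n → ℂ) : Fin n → ℂ := fun j =>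
  if (j : ℕ) + 1 = i then
    (if coord lam i + coord lam (i + 1) = 0 then coord lam (i + 1) - 1 else coord lam (i + 1))
  else if (j : ℕ) = i then
    (if coord lam i + coord lam (i + 1) = 0 then coord lam i + 1 else coord lam i)
  else lam j

/-- The partial order on weights: `μ ≤ ν` iff each partial sum
`Σ_{j=1}^i (ν_j - μ_j)` (1 ≤ i ≤ n-1) is a nonnegative integer and the
total sum `Σ_{j=1}^n (ν_j - μ_j)` is zero. -/
def wle {n : ℕ} (mu nu : Fin n → ℂ) : Prop :=
  (∀ i : ℕ, 1 ≤ i → i ≤ n - 1 →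
    ∃ m : ℕ, ∑ j ∈ Finset.Icc 1 i, (coord nu j - coord mu j) = (m : ℂ)) ∧
  ∑ j ∈ Finset.Icc 1 n, (coord nu j - coord mu j) = 0

/-- Strict inequality of weights. -/
def wlt {n : ℕ} (mu nu : Fin n → ℂ) : Prop := wle mu nu ∧ mu ≠ nu

/-- `a ≻ b` iff `a - b ∈ ℤ_{>0}` or `a = b = 0`. -/
def csucc (a b : ℂ) : Prop := (∃ m : ℤ, 0 < m ∧ a - b = (m : ℂ)) ∨ (a = 0 ∧ b = 0)

/-- `starDesc j k λ = s_j s_{j+1} ⋯ s_k * λ` (apply `s_k` first, `s_j` last);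
equals `λ` when `j > k`. -/
noncomputable def starDesc {n : ℕ} (j k : ℕ) (lam : Fin n → ℂ) : Fin n → ℂ :=
  (List.range' j (k + 1 - j)).foldr (fun i mu => sStar i mu) lam

/-- `starAsc j k λ = s_k s_{k-1} ⋯ s_j * λ` (apply `s_j` first, `s_k` last);
equals `λ` when `j > k`. -/
noncomputable def starAsc {n : ℕ} (j k : ℕ) (lam : Fin n → ℂ) : Fin n → ℂ :=
  (List.range' j (k + 1 - j)).foldl (fun mu i => sStar i mu) lam

lemma coord_sStar {n : ℕ} (i : ℕ) (lam : Fin n → ℂ) (t : ℕ)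
    (ht1 : 1 ≤ t) (ht2 : t ≤ n) :
    coord (sStar i lam) t =
      if t = i then
        (if coord lam i + coord lam (i + 1) = 0 then coord lam (i + 1) - 1
         else coord lam (i + 1))
      else if t = i + 1 then
        (if coord lam i + coord lam (i + 1) = 0 then coord lam i + 1 else coord lam i)
      else coord lam t := by
  have hc : coord (sStar i lam) t = sStar i lam ⟨t - 1, by omega⟩ := by
    rw [coord, dif_pos ⟨ht1, ht2⟩]
  rw [hc]
  simp only [sStar]
  by_cases h1 : t = i
  · rw [if_pos h1, if_pos (by omega : t - 1 + 1 = i)]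
  · rw [if_neg h1, if_neg (by omega : ¬ t - 1 + 1 = i)]
    by_cases h2 : t = i + 1
    · rw [if_pos h2, if_pos (by omega : t - 1 = i)]
    · rw [if_neg h2, if_neg (by omega : ¬ t - 1 = i)]
      rw [coord, dif_pos ⟨ht1, ht2⟩]

lemma starDesc_gt {n : ℕ} (j k : ℕ) (h : k < j) (lam : Fin n → ℂ) :
    starDesc j k lam = lam := by
  unfold starDesc
  rw [show k + 1 - j = 0 by omega]
  rfl

lemma starDesc_step {n : ℕ} (m k : ℕ) (h : m ≤ k) (lam : Fin n → ℂ) :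
    starDesc m k lam = sStar m (starDesc (m + 1) k lam) := by
  unfold starDesc
  rw [show k + 1 - m = (k - m) + 1 by omega, show k + 1 - (m + 1) = k - m by omega,
    List.range'_succ, List.foldr_cons]

/-- Invariant for the main theorem: state after applying `s_m ⋯ s_k`. -/
def Inv13 (n : ℕ) (lam : Fin n → ℂ) (k m : ℕ) : Prop :=
  ∃ c : ℤ, c < 0 ∧ coord (starDesc m k lam) m = (c : ℂ) ∧
    (∀ i, 1 ≤ i → i ≤ m - 1 → coord (starDesc m k lam) i = coord lam i) ∧
    (∀ i, m + 1 ≤ i → i ≤ n - 1 →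
      csucc (coord (starDesc m k lam) i) (coord (starDesc m k lam) (i + 1))) ∧
    (coord (starDesc m k lam) (m + 1) = coord lam m ∨
      (coord (starDesc m k lam) (m + 1) = ((-c : ℤ) : ℂ) ∧
        ((-c : ℤ) : ℂ) = coord lam m + 1 ∧ c < -1))

theorem stmt13 (n : ℕ) (hn : 2 ≤ n) (lam : Fin n → ℂ) (j z k : ℕ)
    (hj : 1 ≤ j) (hz : 2 ≤ z) (hjz : j + z - 1 ≤ n)
    (h1 : ∀ i, 1 ≤ i → i ≤ j - 1 → ∃ m : ℤ, 0 < m ∧ coord lam i - coord lam (i + 1) = (m : ℂ))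
    (h2 : ∀ i, j ≤ i → i ≤ j + z - 1 → coord lam i = 0)
    (h3 : ∀ i, j + z - 1 ≤ i → i ≤ n - 1 →
      ∃ m : ℤ, 0 < m ∧ coord lam i - coord lam (i + 1) = (m : ℂ))
    (hk1 : j + z - 1 ≤ k) (hk2 : k ≤ n - 1) :
    ∀ i, 2 ≤ i → i ≤ n - 1 →
      csucc (coord (starDesc 1 k lam) i) (coord (starDesc 1 k lam) (i + 1)) := by
  have hk0 : 1 ≤ k := by omega
  -- all coordinates from `j` on are nonpositive integers
  have L1 : ∀ i, j ≤ i → i ≤ n → ∃ p : ℤ, p ≤ 0 ∧ coord lam i = (p : ℂ) := by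
    intro i hi
    induction i, hi using Nat.le_induction with
    | base =>
      intro _
      exact ⟨0, le_rfl, by simp [h2 j le_rfl (by omega)]⟩
    | succ i hi ih =>
      intro hin
      by_cases h : i + 1 ≤ j + z - 1
      · exact ⟨0, le_rfl, by simp [h2 (i + 1) (by omega) h]⟩
      · obtain ⟨p, hp0, hpe⟩ := ih (by omega)
        obtain ⟨d, hd, hde⟩ := h3 i (by omega) (by omega)
        refine ⟨p - d, by omega, ?_⟩
        push_cast
        push_cast at hpe hde
        linear_combination hpe - hde
  -- all coordinates from `j+z` on are negative integers
  have L2 : ∀ i, j + z ≤ i → i ≤ n → ∃ p : ℤ, p < 0 ∧ coord lam i = (p : ℂ) := by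
    intro i hi
    induction i, hi using Nat.le_induction with
    | base =>
      intro hin
      obtain ⟨d, hd, hde⟩ := h3 (j + z - 1) le_rfl (by omega)
      have h0 : coord lam (j + z - 1) = 0 := h2 _ (by omega) le_rfl
      rw [show j + z - 1 + 1 = j + z by omega, h0] at hde
      refine ⟨-d, by omega, ?_⟩
      push_cast
      push_cast at hde
      linear_combination -hde
    | succ i hi ih =>
      intro hin
      obtain ⟨p, hp0, hpe⟩ := ih (by omega)
      obtain ⟨d, hd, hde⟩ := h3 i (by omega) (by omega)
      refine ⟨p - d, by omega, ?_⟩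
      push_cast
      push_cast at hpe hde
      linear_combination hpe - hde
  -- a coordinate equal to a positive integer must lie left of `j`
  have hpos : ∀ i (c : ℤ), i ≤ n → coord lam i = (c : ℂ) → 0 < c → i ≤ j - 1 := by
    intro i c hin hci hc
    by_contra h
    obtain ⟨p, hp, hpe⟩ := L1 i (by omega) hin
    rw [hci] at hpe
    have : c = p := by exact_mod_cast hpe
    omega
  -- the original weight is dominant everywhere
  have csuccA : ∀ i, 1 ≤ i → i ≤ n - 1 → csucc (coord lam i) (coord lam (i + 1)) := by
    intro i hi1 hi2
    by_cases hij : i ≤ j - 1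
    · exact Or.inl (h1 i hi1 hij)
    · by_cases hiz : i + 1 ≤ j + z - 1
      · exact Or.inr ⟨h2 i (by omega) (by omega), h2 (i + 1) (by omega) hiz⟩
      · exact Or.inl (h3 i (by omega) hi2)
  -- main downward induction
  have key : ∀ d m, k = m + d → 1 ≤ m → Inv13 n lam k m := by
    intro d
    induction d with
    | zero =>
      intro m hm hm1
      have hmk : m = k := by omega
      subst hmk
      obtain ⟨p, hp, hpe⟩ := L1 m (by omega) (by omega)
      obtain ⟨q, hq, hqe⟩ := L2 (m + 1) (by omega) (by omega)
      have hstep : starDesc m m lam = sStar m lam := by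
        rw [starDesc_step m m le_rfl, starDesc_gt _ _ (by omega)]
      have hS : ¬ coord lam m + coord lam (m + 1) = 0 := by
        rw [hpe, hqe]
        intro h
        have h' : ((p + q : ℤ) : ℂ) = 0 := by push_cast; linear_combination h
        have : (p + q : ℤ) = 0 := by exact_mod_cast h'
        omega
      have E : ∀ t, 1 ≤ t → t ≤ n → coord (starDesc m m lam) t =
          if t = m then coord lam (m + 1) else if t = m + 1 then coord lam m
          else coord lam t := by
        intro t ht1 ht2
        rw [hstep, coord_sStar m lam t ht1 ht2]
        simp only [if_neg hS]
      refine ⟨q, hq, ?_, ?_, ?_, ?_⟩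
      · rw [E m (by omega) (by omega), if_pos rfl]; exact hqe
      · intro i hi1 hi2
        rw [E i (by omega) (by omega), if_neg (by omega), if_neg (by omega)]
      · intro i hi1 hi2
        rw [E i (by omega) (by omega), E (i + 1) (by omega) (by omega)]
        by_cases hik : i = m + 1
        · subst hik
          rw [if_neg (by omega), if_pos rfl, if_neg (by omega), if_neg (by omega)]
          obtain ⟨m1, hm1, he1⟩ := h3 m (by omega) (by omega)
          obtain ⟨m2, hm2, he2⟩ := h3 (m + 1) (by omega) (by omega)
          refine Or.inl ⟨m1 + m2, by omega, ?_⟩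
          push_cast
          push_cast at he1 he2
          linear_combination he1 + he2
        · rw [if_neg (by omega), if_neg (by omega), if_neg (by omega), if_neg (by omega)]
          exact csuccA i (by omega) hi2
      · rw [E (m + 1) (by omega) (by omega), if_neg (by omega), if_pos rfl]
        exact Or.inl rfl
    | succ d ih =>
      intro m hm hm1
      obtain ⟨c, hc, hI1, hI2, hI3, hI4⟩ := ih (m + 1) (by omega) (by omega)
      set ν := starDesc (m + 1) k lam with hν
      have hstep : starDesc m k lam = sStar m ν := starDesc_step m k (by omega) lam
      have hνm : coord ν m = coord lam m := hI2 m (by omega) (by omega)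
      have E : ∀ t, 1 ≤ t → t ≤ n → coord (starDesc m k lam) t =
          if t = m then
            (if coord ν m + coord ν (m + 1) = 0 then coord ν (m + 1) - 1
             else coord ν (m + 1))
          else if t = m + 1 then
            (if coord ν m + coord ν (m + 1) = 0 then coord ν m + 1 else coord ν m)
          else coord ν t := by
        intro t ht1 ht2
        rw [hstep, coord_sStar m ν t ht1 ht2]
      by_cases hS : coord ν m + coord ν (m + 1) = 0
      · -- special (cascade) case
        have h0 : coord lam m + (c : ℂ) = 0 := by rw [← hνm, ← hI1]; exact hS
        have hlam_m : coord lam m = ((-c : ℤ) : ℂ) := by push_cast; linear_combination h0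
        have hmj : m ≤ j - 1 := hpos m (-c) (by omega) hlam_m (by omega)
        refine ⟨c - 1, by omega, ?_, ?_, ?_, ?_⟩
        · rw [E m (by omega) (by omega), if_pos rfl, if_pos hS, hI1]
          push_cast; ring
        · intro i hi1 hi2
          rw [E i (by omega) (by omega), if_neg (by omega), if_neg (by omega)]
          exact hI2 i hi1 (by omega)
        · intro i hi1 hi2
          rw [E i (by omega) (by omega), E (i + 1) (by omega) (by omega)]
          by_cases hik : i = m + 1
          · subst hik
            rw [if_neg (by omega), if_pos rfl, if_pos hS, if_neg (by omega),
              if_neg (by omega)]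
            rcases hI4 with h4a | ⟨h4b1, h4b2, h4b3⟩
            · obtain ⟨m1, hm1, he1⟩ := h1 m (by omega) hmj
              refine Or.inl ⟨m1 + 1, by omega, ?_⟩
              rw [hνm, h4a]
              push_cast
              push_cast at he1
              linear_combination he1
            · refine Or.inl ⟨1, one_pos, ?_⟩
              rw [hνm, h4b1, hlam_m]
              push_cast; ring
          · rw [if_neg (by omega), if_neg (by omega), if_neg (by omega), if_neg (by omega)]
            exact hI3 i (by omega) hi2
        · rw [E (m + 1) (by omega) (by omega), if_neg (by omega), if_pos rfl, if_pos hS]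
          refine Or.inr ⟨?_, ?_, by omega⟩
          · rw [hνm, hlam_m]; push_cast; ring
          · rw [hlam_m]; push_cast; ring
      · -- swap case
        refine ⟨c, hc, ?_, ?_, ?_, ?_⟩
        · rw [E m (by omega) (by omega), if_pos rfl, if_neg hS]
          exact hI1
        · intro i hi1 hi2
          rw [E i (by omega) (by omega), if_neg (by omega), if_neg (by omega)]
          exact hI2 i hi1 (by omega)
        · intro i hi1 hi2
          rw [E i (by omega) (by omega), E (i + 1) (by omega) (by omega)]
          by_cases hik : i = m + 1
          · subst hik
            rw [if_neg (by omega), if_pos rfl, if_neg hS, if_neg (by omega),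
              if_neg (by omega)]
            rcases hI4 with h4a | ⟨h4b1, h4b2, h4b3⟩
            · rw [hνm, h4a]
              exact csuccA m (by omega) (by omega)
            · have hlam1 : coord lam (m + 1) = ((-c - 1 : ℤ) : ℂ) := by
                push_cast
                push_cast at h4b2
                linear_combination (-1 : ℂ) * h4b2
              have hm1j : m + 1 ≤ j - 1 := hpos (m + 1) (-c - 1) (by omega) hlam1 (by omega)
              obtain ⟨m1, hm1, he1⟩ := h1 m (by omega) (by omega)
              have hm1ne : m1 ≠ 1 := by
                intro hone
                apply hS
                rw [hνm, hI1]
                subst hone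
                push_cast at he1 hlam1
                linear_combination he1 + hlam1
              refine Or.inl ⟨m1 - 1, by omega, ?_⟩
              rw [hνm, h4b1]
              push_cast
              push_cast at he1 hlam1
              linear_combination he1 + hlam1
          · rw [if_neg (by omega), if_neg (by omega), if_neg (by omega), if_neg (by omega)]
            exact hI3 i (by omega) hi2
        · rw [E (m + 1) (by omega) (by omega), if_neg (by omega), if_pos rfl, if_neg hS]
          exact Or.inl hνm
  obtain ⟨c, hc, hI1, hI2, hI3, hI4⟩ := key (k - 1) 1 (by omega) le_rfl
  intro i hi1 hi2
  exact hI3 i (by omega) hi2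
end

section
/- Let λ ∈ ℂ^n and let 2 ≤ k ≤ n−1 be such that λ_{k−1} = λ_k = λ_{k+1} = 0. Then s_k * (s_{k−1} * λ) = s_{k−1} * (s_k * λ), and this common weight is strictly smaller than both s_k * λ and s_{k−1} * λ in the partial order. -/
open Finset

lemma coord_apply {n : ℕ} (f : Fin n → ℂ) (m : ℕ) (h1 : 1 ≤ m) (h2 : m ≤ n) :
    coord f m = f ⟨m - 1, by omega⟩ := dif_pos ⟨h1, h2⟩

lemma coord_sStar_self {n : ℕ} (i : ℕ) (lam : Fin n → ℂ) (h1 : 1 ≤ i) (h2 : i ≤ n) :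
    coord (sStar i lam) i =
      if coord lam i + coord lam (i + 1) = 0 then coord lam (i + 1) - 1
      else coord lam (i + 1) := by
  rw [coord_apply _ i h1 h2]
  simp only [sStar]
  rw [if_pos (show i - 1 + 1 = i by omega)]

lemma coord_sStar_succ {n : ℕ} (i : ℕ) (lam : Fin n → ℂ) (h2 : i + 1 ≤ n) :
    coord (sStar i lam) (i + 1) =
      if coord lam i + coord lam (i + 1) = 0 then coord lam i + 1
      else coord lam i := by
  rw [coord_apply _ (i + 1) (by omega) h2]
  simp only [sStar, Nat.add_sub_cancel]
  rw [if_neg (show ¬(i + 1 = i) by omega), if_pos trivial]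

lemma coord_sStar_other {n : ℕ} (i m : ℕ) (lam : Fin n → ℂ)
    (hm1 : m ≠ i) (hm2 : m ≠ i + 1) :
    coord (sStar i lam) m = coord lam m := by
  by_cases h : 1 ≤ m ∧ m ≤ n
  · rw [coord_apply _ m h.1 h.2, coord_apply _ m h.1 h.2]
    simp only [sStar]
    rw [if_neg (show ¬(m - 1 + 1 = i) by omega), if_neg (show ¬(m - 1 = i) by omega)]
  · unfold coord
    rw [dif_neg h, dif_neg h]

lemma coord_ext {n : ℕ} {mu nu : Fin n → ℂ}
    (h : ∀ m, 1 ≤ m → m ≤ n → coord mu m = coord nu m) : mu = nu := by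
  funext j
  have := h (j.val + 1) (by omega) (by omega)
  rw [coord_apply _ _ (by omega) (by omega), coord_apply _ _ (by omega) (by omega)] at this
  simpa using this

lemma wlt_of_coords {n : ℕ} (mu nu : Fin n → ℂ) (p : ℕ) (hp : 1 ≤ p) (hpn : p + 1 ≤ n)
    (hd : ∀ j, coord nu j - coord mu j =
      (if j = p then (1 : ℂ) else 0) + (if j = p + 1 then (-1 : ℂ) else 0)) :
    wlt mu nu := by
  have key : ∀ N : ℕ, ∑ j ∈ Finset.Icc 1 N, (coord nu j - coord mu j) =
      (if p ∈ Finset.Icc 1 N then (1 : ℂ) else 0) +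
      (if p + 1 ∈ Finset.Icc 1 N then (-1 : ℂ) else 0) := by
    intro N
    rw [Finset.sum_congr rfl fun j _ => hd j, Finset.sum_add_distrib,
      Finset.sum_ite_eq' _ p (fun _ => (1 : ℂ)), Finset.sum_ite_eq' _ (p + 1) (fun _ => (-1 : ℂ))]
  constructor
  · constructor
    · intro i hi1 hin
      rw [key i]
      simp only [Finset.mem_Icc]
      by_cases h1 : p + 1 ≤ i
      · exact ⟨0, by rw [if_pos ⟨hp, by omega⟩, if_pos ⟨by omega, h1⟩]; norm_num⟩
      · by_cases h2 : p ≤ i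
        · exact ⟨1, by rw [if_pos ⟨hp, h2⟩, if_neg (by omega)]; norm_num⟩
        · exact ⟨0, by rw [if_neg (by omega), if_neg (by omega)]; norm_num⟩
    · rw [key n]
      rw [if_pos (Finset.mem_Icc.2 ⟨hp, by omega⟩),
        if_pos (Finset.mem_Icc.2 ⟨by omega, hpn⟩)]
      ring
  · intro h
    have hdp := hd p
    rw [h, sub_self, if_pos rfl, if_neg (by omega)] at hdp
    norm_num at hdp

theorem stmt15 (n : ℕ) (hn : 3 ≤ n) (lam : Fin n → ℂ) (k : ℕ)
    (hk1 : 2 ≤ k) (hk2 : k ≤ n - 1)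
    (h1 : coord lam (k - 1) = 0) (h2 : coord lam k = 0) (h3 : coord lam (k + 1) = 0) :
    sStar k (sStar (k - 1) lam) = sStar (k - 1) (sStar k lam) ∧
    wlt (sStar k (sStar (k - 1) lam)) (sStar k lam) ∧
    wlt (sStar k (sStar (k - 1) lam)) (sStar (k - 1) lam) := by
  obtain ⟨a, rfl⟩ : ∃ a, k = a + 1 := ⟨k - 1, by omega⟩
  simp only [Nat.add_sub_cancel] at h1 hk1 hk2 ⊢
  have ha1 : 1 ≤ a := by omega
  have han : a + 1 + 1 ≤ n := by omega
  set A := sStar a lam with hA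
  set C := sStar (a + 1) lam with hC
  -- coordinates of A = s_{k-1} λ
  have hA1 : coord A a = -1 := by
    rw [hA, coord_sStar_self a lam ha1 (by omega), if_pos (by rw [h1, h2]; ring), h2]; ring
  have hA2 : coord A (a + 1) = 1 := by
    rw [hA, coord_sStar_succ a lam (by omega), if_pos (by rw [h1, h2]; ring), h1]; ring
  have hA3 : coord A (a + 1 + 1) = 0 := by
    rw [hA, coord_sStar_other a (a + 1 + 1) lam (by omega) (by omega)]; exact h3
  have hAo : ∀ m, m ≠ a → m ≠ a + 1 → coord A m = coord lam m := fun m hma hmb =>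
    coord_sStar_other a m lam hma hmb
  -- coordinates of B = s_k A
  have hsB : coord A (a + 1) + coord A (a + 1 + 1) ≠ 0 := by rw [hA2, hA3]; norm_num
  have hB1 : coord (sStar (a + 1) A) (a + 1) = 0 := by
    rw [coord_sStar_self (a + 1) A (by omega) (by omega), if_neg hsB]; exact hA3
  have hB2 : coord (sStar (a + 1) A) (a + 1 + 1) = 1 := by
    rw [coord_sStar_succ (a + 1) A han, if_neg hsB]; exact hA2
  have hB0 : coord (sStar (a + 1) A) a = -1 := by
    rw [coord_sStar_other (a + 1) a A (by omega) (by omega)]; exact hA1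
  have hBo : ∀ m, m ≠ a → m ≠ a + 1 → m ≠ a + 1 + 1 →
      coord (sStar (a + 1) A) m = coord lam m := by
    intro m hma hmb hmc
    rw [coord_sStar_other (a + 1) m A hmb hmc]; exact hAo m hma hmb
  -- coordinates of C = s_k λ
  have hC0 : coord C a = 0 := by
    rw [hC, coord_sStar_other (a + 1) a lam (by omega) (by omega)]; exact h1
  have hC1 : coord C (a + 1) = -1 := by
    rw [hC, coord_sStar_self (a + 1) lam (by omega) (by omega),
      if_pos (by rw [h2, h3]; ring), h3]; ring
  have hC2 : coord C (a + 1 + 1) = 1 := by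
    rw [hC, coord_sStar_succ (a + 1) lam han, if_pos (by rw [h2, h3]; ring), h2]; ring
  have hCo : ∀ m, m ≠ a + 1 → m ≠ a + 1 + 1 → coord C m = coord lam m := fun m hma hmb =>
    coord_sStar_other (a + 1) m lam hma hmb
  -- coordinates of D = s_{k-1} C
  have hsD : coord C a + coord C (a + 1) ≠ 0 := by rw [hC0, hC1]; norm_num
  have hD0 : coord (sStar a C) a = -1 := by
    rw [coord_sStar_self a C ha1 (by omega), if_neg hsD]; exact hC1
  have hD1 : coord (sStar a C) (a + 1) = 0 := by
    rw [coord_sStar_succ a C (by omega), if_neg hsD]; exact hC0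
  have hD2 : coord (sStar a C) (a + 1 + 1) = 1 := by
    rw [coord_sStar_other a (a + 1 + 1) C (by omega) (by omega)]; exact hC2
  have hDo : ∀ m, m ≠ a → m ≠ a + 1 → m ≠ a + 1 + 1 →
      coord (sStar a C) m = coord lam m := by
    intro m hma hmb hmc
    rw [coord_sStar_other a m C hma hmb]; exact hCo m hmb hmc
  refine ⟨?_, ?_, ?_⟩
  · apply coord_ext
    intro m hm1 hm2
    by_cases e1 : m = a
    · subst e1; rw [hB0, hD0]
    · by_cases e2 : m = a + 1
      · subst e2; rw [hB1, hD1]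
      · by_cases e3 : m = a + 1 + 1
        · subst e3; rw [hB2, hD2]
        · rw [hBo m e1 e2 e3, hDo m e1 e2 e3]
  · apply wlt_of_coords _ _ a ha1 (by omega)
    intro j
    by_cases e1 : j = a
    · subst e1; rw [hC0, hB0, if_pos rfl, if_neg (by omega)]; ring
    · by_cases e2 : j = a + 1
      · subst e2; rw [hC1, hB1, if_neg (by omega), if_pos rfl]; ring
      · by_cases e3 : j = a + 1 + 1
        · subst e3; rw [hC2, hB2, if_neg (by omega), if_neg (by omega)]; ring
        · rw [hCo j e2 e3, hBo j e1 e2 e3, if_neg e1, if_neg e2]; ring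
  · apply wlt_of_coords _ _ (a + 1) (by omega) han
    intro j
    by_cases e1 : j = a
    · subst e1; rw [hA1, hB0, if_neg (by omega), if_neg (by omega)]; ring
    · by_cases e2 : j = a + 1
      · subst e2; rw [hA2, hB1, if_pos rfl, if_neg (by omega)]; ring
      · by_cases e3 : j = a + 1 + 1
        · subst e3; rw [hA3, hB2, if_neg (by omega), if_pos rfl]; ring
        · rw [hAo j e1 e2, hBo j e1 e2 e3, if_neg e2, if_neg e3]; ring
end
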